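/- Let p ∈ ℕ and let q be a real polynomial in one variable of degree at most p. Then for all real numbers a < b one has q(b)² ≤ ((p+1)²/(b−a)) · ∫_a^b q(x)² dx. -/

import Mathlib

open MeasureTheory Polynomial Finset

noncomputable section TIE

/-- Integral of a polynomial over `(0,1)`. -/
noncomputable def tieI (P : Polynomial ℝ) : ℝ := ∫ x in Set.Ioo (0:ℝ) 1, P.eval x

lemma tieI_eq (P : Polynomial ℝ) : tieI P = ∫ x in (0:ℝ)..1, P.eval x := by
  rw [intervalIntegral.integral_of_le zero_le_one,
    MeasureTheory.integral_Ioc_eq_integral_Ioo]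
  rfl

lemma tie_intable (P : Polynomial ℝ) :
    IntervalIntegrable (fun x => P.eval x) volume 0 1 :=
  P.continuous.intervalIntegrable _ _

lemma tieI_add (P Q : Polynomial ℝ) : tieI (P + Q) = tieI P + tieI Q := by
  simp only [tieI_eq]
  rw [← intervalIntegral.integral_add (tie_intable P) (tie_intable Q)]
  simp

lemma tieI_zero : tieI 0 = 0 := by simp [tieI]

lemma tieI_C_mul (c : ℝ) (P : Polynomial ℝ) : tieI (C c * P) = c * tieI P := by
  simp only [tieI_eq]
  rw [← intervalIntegral.integral_const_mul]
  simp

lemma tieI_sum {α : Type*} (s : Finset α) (F : α → Polynomial ℝ) :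
    tieI (∑ i ∈ s, F i) = ∑ i ∈ s, tieI (F i) := by
  classical
  induction s using Finset.induction with
  | empty => simp [tieI_zero]
  | insert a s h ih => rw [Finset.sum_insert h, tieI_add, ih, Finset.sum_insert h]

lemma tieI_derivative (P : Polynomial ℝ) :
    tieI (derivative P) = P.eval 1 - P.eval 0 := by
  rw [tieI_eq]
  exact intervalIntegral.integral_deriv_eq_sub'
    (fun x => P.eval x) (funext fun x => (P.hasDerivAt x).deriv)
    (fun x _ => (P.hasDerivAt x).differentiableAt)
    ((derivative P).continuous.continuousOn)

lemma tieI_X_pow (n : ℕ) : tieI (X ^ n) = 1 / (n + 1) := by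
  rw [tieI_eq]
  simp only [eval_pow, eval_X]
  rw [integral_pow]
  norm_num

/-- single integration by parts -/
lemma tieI_parts (P R : Polynomial ℝ) :
    tieI (P * derivative R) =
      (P * R).eval 1 - (P * R).eval 0 - tieI (derivative P * R) := by
  have h := tieI_derivative (P * R)
  rw [derivative_mul, tieI_add] at h
  linarith

lemma pow_dvd_deriv {r : ℝ} {n : ℕ} {P : Polynomial ℝ}
    (h : (X - C r) ^ n ∣ P) : (X - C r) ^ (n - 1) ∣ derivative P := by
  obtain ⟨g, rfl⟩ := h
  cases n with
  | zero => simp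
  | succ m =>
    have hd : derivative ((X - C r) ^ (m + 1) * g) =
        (X - C r) ^ m * (C ((m + 1 : ℕ) : ℝ) * g + (X - C r) * derivative g) := by
      rw [derivative_mul, derivative_pow, derivative_X_sub_C, Nat.add_sub_cancel, mul_one]
      ring
    rw [Nat.add_sub_cancel, hd]
    exact Dvd.intro _ rfl

lemma pow_dvd_iterate_deriv {r : ℝ} {n : ℕ} {P : Polynomial ℝ}
    (h : (X - C r) ^ n ∣ P) (i : ℕ) :
    (X - C r) ^ (n - i) ∣ derivative^[i] P := by
  induction i generalizing P n with
  | zero => simpa using h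
  | succ m ih =>
    rw [Function.iterate_succ_apply]
    have h2 := ih (pow_dvd_deriv h)
    have hidx : n - 1 - m = n - (m + 1) := by omega
    rwa [hidx] at h2

lemma eval_zero_of_pow_dvd {r : ℝ} {m : ℕ} {P : Polynomial ℝ}
    (h : (X - C r) ^ m ∣ P) (hm : 0 < m) : P.eval r = 0 := by
  obtain ⟨g, rfl⟩ := h
  simp [eval_pow, zero_pow hm.ne']

/-- `k`-fold integration by parts with vanishing boundary terms. -/
lemma tieI_parts_iter (k : ℕ) (f g : Polynomial ℝ)
    (h0 : ∀ i < k, (derivative^[i] g).eval 0 = 0)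
    (h1 : ∀ i < k, (derivative^[i] g).eval 1 = 0) :
    tieI (f * derivative^[k] g) = (-1) ^ k * tieI (derivative^[k] f * g) := by
  induction k generalizing f g with
  | zero => simp
  | succ m ih =>
    rw [Function.iterate_succ_apply]
    have h0' : ∀ i < m, (derivative^[i] (derivative g)).eval 0 = 0 := by
      intro i hi
      rw [← Function.iterate_succ_apply]
      exact h0 (i + 1) (by omega)
    have h1' : ∀ i < m, (derivative^[i] (derivative g)).eval 1 = 0 := by
      intro i hi
      rw [← Function.iterate_succ_apply]
      exact h1 (i + 1) (by omega)
    rw [ih f (derivative g) h0' h1']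
    have hparts := tieI_parts (derivative^[m] f) g
    have hg0 : g.eval 0 = 0 := h0 0 (by omega)
    have hg1 : g.eval 1 = 0 := h1 0 (by omega)
    rw [eval_mul, eval_mul, hg0, hg1, mul_zero, mul_zero] at hparts
    rw [hparts, ← Function.iterate_succ_apply' derivative]
    ring

/-- the basic beta-type integral -/
lemma tieI_X_pow_mul (k : ℕ) : ∀ j : ℕ,
    tieI (X ^ j * (X - C 1) ^ k) =
      (-1) ^ k * k.factorial * j.factorial / (j + k + 1).factorial := by
  induction k with
  | zero =>
    intro j
    have h : (j.factorial : ℝ) ≠ 0 := by exact_mod_cast j.factorial_ne_zero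
    simp only [pow_zero, mul_one, tieI_X_pow, Nat.factorial]
    push_cast [Nat.factorial_succ]
    field_simp
  | succ m ih =>
    intro j
    have hG : tieI (derivative ((X : Polynomial ℝ) ^ (j+1) * (X - C 1) ^ (m+1))) = 0 := by
      rw [tieI_derivative]
      simp [eval_mul, eval_pow, zero_pow]
    have hder : derivative ((X : Polynomial ℝ) ^ (j+1) * (X - C 1) ^ (m+1)) =
        C ((j + 1 : ℕ) : ℝ) * (X ^ j * (X - C 1) ^ (m+1))
          + C ((m + 1 : ℕ) : ℝ) * (X ^ (j+1) * (X - C 1) ^ m) := by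
      rw [derivative_mul, derivative_X_pow, derivative_pow, derivative_X_sub_C,
        Nat.add_sub_cancel, Nat.add_sub_cancel, mul_one]
      ring
    rw [hder, tieI_add, tieI_C_mul, tieI_C_mul, ih (j+1)] at hG
    have hidx : j + 1 + m + 1 = j + (m + 1) + 1 := by omega
    rw [hidx] at hG
    have hfac : ((j + (m+1) + 1).factorial : ℝ) ≠ 0 := by
      exact_mod_cast (j + (m+1) + 1).factorial_ne_zero
    have hj1 : ((j:ℝ) + 1) ≠ 0 := by positivity
    have hfs : ((j+1).factorial : ℝ) = ((j:ℝ) + 1) * j.factorial := by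
      rw [Nat.factorial_succ]; push_cast; ring
    have hms : ((m+1).factorial : ℝ) = ((m:ℝ) + 1) * m.factorial := by
      rw [Nat.factorial_succ]; push_cast; ring
    push_cast at hG ⊢
    rw [hfs] at hG
    rw [hms]
    have := hG
    field_simp at this ⊢
    refine mul_left_cancel₀ hj1 ?_
    linear_combination this

/-- Shifted Legendre polynomial on `[0,1]` (Rodrigues formula), normalized by `Q k 1 = 1`. -/
noncomputable def tieQ (k : ℕ) : Polynomial ℝ :=
  C ((k.factorial : ℝ)⁻¹) * derivative^[k] (X ^ k * (X - C 1) ^ k)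

lemma tieI_X_pow_mul_Q (j k : ℕ) :
    tieI (X ^ j * tieQ k) =
      (j.descFactorial k : ℝ) * j.factorial / (j + k + 1).factorial := by
  unfold tieQ
  rw [show (X : Polynomial ℝ) ^ j * (C ((k.factorial : ℝ)⁻¹) *
        derivative^[k] (X ^ k * (X - C 1) ^ k)) =
      C ((k.factorial : ℝ)⁻¹) * (X ^ j * derivative^[k] (X ^ k * (X - C 1) ^ k)) from by ring,
    tieI_C_mul]
  have hdvd0 : ((X : Polynomial ℝ) - C 0) ^ k ∣ X ^ k * (X - C 1) ^ k := by
    rw [C_0, sub_zero]; exact dvd_mul_right _ _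
  have hdvd1 : ((X : Polynomial ℝ) - C 1) ^ k ∣ X ^ k * (X - C 1) ^ k := dvd_mul_left _ _
  have h0 : ∀ i < k, (derivative^[i] ((X:Polynomial ℝ) ^ k * (X - C 1) ^ k)).eval 0 = 0 := by
    intro i hi
    exact eval_zero_of_pow_dvd (pow_dvd_iterate_deriv hdvd0 i) (by omega)
  have h1 : ∀ i < k, (derivative^[i] ((X:Polynomial ℝ) ^ k * (X - C 1) ^ k)).eval 1 = 0 := by
    intro i hi
    exact eval_zero_of_pow_dvd (pow_dvd_iterate_deriv hdvd1 i) (by omega)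
  rw [tieI_parts_iter k _ _ h0 h1]
  by_cases hjk : k ≤ j
  · rw [iterate_derivative_X_pow_eq_C_mul]
    have hx : (X : Polynomial ℝ) ^ (j - k) * X ^ k = X ^ j := by
      rw [← pow_add, Nat.sub_add_cancel hjk]
    have h2 : (C ((j.descFactorial k : ℕ) : ℝ) * X ^ (j - k)) *
        ((X:Polynomial ℝ) ^ k * (X - C 1) ^ k) =
        C ((j.descFactorial k : ℕ) : ℝ) * (X ^ j * (X - C 1) ^ k) := by
      rw [← hx]; ring
    rw [h2, tieI_C_mul, tieI_X_pow_mul]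
    have hkf : (k.factorial : ℝ) ≠ 0 := by exact_mod_cast k.factorial_ne_zero
    have hfac : ((j + k + 1).factorial : ℝ) ≠ 0 := by
      exact_mod_cast (j + k + 1).factorial_ne_zero
    rcases Nat.even_or_odd k with hpar | hpar <;> rw [hpar.neg_one_pow] <;>
      field_simp <;> ring
  · push_neg at hjk
    rw [iterate_derivative_eq_zero (by simpa [natDegree_X_pow] using hjk)]
    rw [Nat.descFactorial_eq_zero_iff_lt.mpr hjk]
    simp [tieI_zero]

lemma tie_telescope (j : ℕ) :
    ∑ k ∈ range (j + 1),
      ((2 * k + 1 : ℕ) : ℝ) *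
        ((j.descFactorial k : ℝ) * j.factorial / (j + k + 1).factorial) = 1 := by
  set g : ℕ → ℝ := fun k =>
    if k ≤ j then (j.descFactorial k : ℝ) * j.factorial / (j + k).factorial else 0 with hg
  have key : ∀ k ∈ range (j + 1),
      ((2 * k + 1 : ℕ) : ℝ) *
        ((j.descFactorial k : ℝ) * j.factorial / (j + k + 1).factorial) = g k - g (k + 1) := by
    intro k hk
    have hkj : k ≤ j := by simp only [Finset.mem_range] at hk; omega
    have hfac1 : ((j + k).factorial : ℝ) ≠ 0 := by exact_mod_cast (j + k).factorial_ne_zero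
    have hfs : ((j + k + 1).factorial : ℝ) = ((j:ℝ) + k + 1) * (j + k).factorial := by
      rw [Nat.factorial_succ]; push_cast; ring
    rcases eq_or_lt_of_le hkj with heq | hlt
    · subst heq
      have : ¬ (k + 1 ≤ k) := by omega
      simp only [hg, if_pos le_rfl, if_neg this]
      rw [hfs]
      push_cast
      field_simp
      ring
    · have hk1 : k + 1 ≤ j := hlt
      simp only [hg, if_pos hkj, if_pos hk1]
      have hidx : j + (k + 1) = j + k + 1 := by omega
      rw [Nat.descFactorial_succ, hidx, hfs]
      push_cast [Nat.cast_sub hkj]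
      field_simp
      ring
  rw [Finset.sum_congr rfl key, Finset.sum_range_sub' g]
  have hgj : g (j + 1) = 0 := by simp [hg]
  have hg0 : g 0 = 1 := by
    have hfac1 : ((j + 0).factorial : ℝ) ≠ 0 := by exact_mod_cast (j + 0).factorial_ne_zero
    simp only [hg, if_pos (Nat.zero_le j), Nat.descFactorial_zero, Nat.cast_one, one_mul,
      Nat.add_zero]
    field_simp
  rw [hgj, hg0, sub_zero]

/-- The reproducing kernel at `1` for polynomials of degree at most `p` on `(0,1)`. -/
noncomputable def tieK (p : ℕ) : Polynomial ℝ :=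
  ∑ k ∈ range (p + 1), C ((2 * k + 1 : ℕ) : ℝ) * tieQ k

lemma tieI_X_pow_mul_K {p j : ℕ} (hj : j ≤ p) : tieI (X ^ j * tieK p) = 1 := by
  unfold tieK
  rw [Finset.mul_sum]
  have hsummand : ∀ k ∈ range (p + 1),
      tieI ((X:Polynomial ℝ) ^ j * (C ((2 * k + 1 : ℕ) : ℝ) * tieQ k)) =
      ((2 * k + 1 : ℕ) : ℝ) *
        ((j.descFactorial k : ℝ) * j.factorial / (j + k + 1).factorial) := by
    intro k _
    rw [show (X:Polynomial ℝ) ^ j * (C ((2 * k + 1 : ℕ) : ℝ) * tieQ k) =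
      C ((2 * k + 1 : ℕ) : ℝ) * (X ^ j * tieQ k) from by ring, tieI_C_mul, tieI_X_pow_mul_Q]
  rw [tieI_sum, Finset.sum_congr rfl hsummand]
  rw [← Finset.sum_subset (Finset.range_subset_range.mpr (by omega : j + 1 ≤ p + 1))]
  · exact tie_telescope j
  · intro k hk hk'
    simp only [Finset.mem_range] at hk hk'
    have : j < k := by omega
    rw [Nat.descFactorial_eq_zero_iff_lt.mpr this]
    simp

lemma eval_one_mul_pow (k : ℕ) : ∀ f : Polynomial ℝ,
    (derivative^[k] (f * (X - C 1) ^ k)).eval 1 = k.factorial * f.eval 1 := by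
  induction k with
  | zero => intro f; simp
  | succ m ih =>
    intro f
    have hd : derivative (f * (X - C 1) ^ (m + 1)) =
        (derivative f * (X - C 1) + C ((m + 1 : ℕ) : ℝ) * f) * (X - C 1) ^ m := by
      rw [derivative_mul, derivative_pow, derivative_X_sub_C, Nat.add_sub_cancel, mul_one]
      ring
    rw [Function.iterate_succ_apply, hd, ih]
    simp only [eval_add, eval_mul, eval_C, eval_sub, eval_X, eval_one, sub_self, mul_zero,
      zero_add, Nat.factorial_succ]
    push_cast
    ring

lemma tieQ_eval_one (k : ℕ) : (tieQ k).eval 1 = 1 := by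
  unfold tieQ
  rw [eval_mul, eval_C, eval_one_mul_pow k (X ^ k)]
  have hkf : (k.factorial : ℝ) ≠ 0 := by exact_mod_cast k.factorial_ne_zero
  simp [eval_pow]
  field_simp

lemma tieK_eval_one (p : ℕ) : (tieK p).eval 1 = ((p : ℝ) + 1) ^ 2 := by
  unfold tieK
  rw [eval_finset_sum]
  have hsum : ∀ n : ℕ, ∑ k ∈ range n, ((2 * k + 1 : ℕ) : ℝ) = (n : ℝ) ^ 2 := by
    intro n
    induction n with
    | zero => simp
    | succ m ihm =>
      rw [Finset.sum_range_succ, ihm]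
      push_cast
      ring
  have h1 : ∀ k ∈ range (p + 1),
      (C ((2 * k + 1 : ℕ) : ℝ) * tieQ k).eval 1 = ((2 * k + 1 : ℕ) : ℝ) := by
    intro k _
    rw [eval_mul, eval_C, tieQ_eval_one, mul_one]
  rw [Finset.sum_congr rfl h1, hsum]
  push_cast
  ring

lemma tieQ_natDegree (k : ℕ) : (tieQ k).natDegree ≤ k := by
  unfold tieQ
  refine (natDegree_C_mul_le _ _).trans ((natDegree_iterate_derivative _ _).trans ?_)
  have h : ((X : Polynomial ℝ) ^ k * (X - C 1) ^ k).natDegree ≤ 2 * k := by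
    refine natDegree_mul_le.trans ?_
    have h1 : ((X : Polynomial ℝ) ^ k).natDegree ≤ k := natDegree_X_pow_le k
    have h2 : (((X : Polynomial ℝ) - C 1) ^ k).natDegree ≤ k * 1 :=
      natDegree_pow_le.trans (by
        exact Nat.mul_le_mul_left _ (by rw [natDegree_X_sub_C]))
    omega
  omega

lemma tieK_natDegree (p : ℕ) : (tieK p).natDegree ≤ p := by
  unfold tieK
  refine natDegree_sum_le_of_forall_le _ _ ?_
  intro k hk
  simp only [Finset.mem_range] at hk
  exact (natDegree_C_mul_le _ _).trans ((tieQ_natDegree k).trans (by omega))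

lemma tieI_mul_K {p : ℕ} {q : Polynomial ℝ} (hq : q.natDegree ≤ p) :
    tieI (q * tieK p) = q.eval 1 := by
  have hrepr := q.as_sum_range' (p + 1) (Nat.lt_succ_of_le hq)
  have hterm : ∀ i ∈ range (p + 1),
      tieI ((monomial i (q.coeff i) : Polynomial ℝ) * tieK p) = q.coeff i := by
    intro i hi
    simp only [Finset.mem_range] at hi
    rw [← C_mul_X_pow_eq_monomial, mul_assoc, tieI_C_mul,
      tieI_X_pow_mul_K (by omega : i ≤ p), mul_one]
  conv_lhs => rw [hrepr]
  rw [Finset.sum_mul, tieI_sum, Finset.sum_congr rfl hterm]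
  conv_rhs => rw [hrepr]
  rw [eval_finset_sum]
  simp [eval_monomial]

lemma tieI_sq_nonneg (P : Polynomial ℝ) : 0 ≤ tieI (P * P) := by
  rw [tieI_eq]
  apply intervalIntegral.integral_nonneg zero_le_one
  intro x _
  rw [eval_mul]
  exact mul_self_nonneg _

lemma tieI_sub (A B : Polynomial ℝ) : tieI (A - B) = tieI A - tieI B := by
  have h := tieI_add (A - B) B
  simp only [sub_add_cancel] at h
  linarith

lemma tie_key {p : ℕ} {q : Polynomial ℝ} (hq : q.natDegree ≤ p) :
    (q.eval 1) ^ 2 ≤ ((p : ℝ) + 1) ^ 2 * tieI (q * q) := by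
  set S : ℝ := ((p : ℝ) + 1) ^ 2 with hS
  set e : ℝ := q.eval 1 with he
  have hKK : tieI (tieK p * tieK p) = S := by
    rw [tieI_mul_K (tieK_natDegree p), tieK_eval_one]
  have hqK : tieI (q * tieK p) = e := tieI_mul_K hq
  have hKq : tieI (tieK p * q) = e := by rw [mul_comm]; exact hqK
  have hexp : (C S * q - C e * tieK p) * (C S * q - C e * tieK p)
      = C S * (C S * (q * q)) - C S * (C e * (q * tieK p))
        - C e * (C S * (tieK p * q)) + C e * (C e * (tieK p * tieK p)) := by ring
  have hpos := tieI_sq_nonneg (C S * q - C e * tieK p)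
  rw [hexp] at hpos
  simp only [tieI_add, tieI_sub, tieI_C_mul] at hpos
  rw [hKK, hqK, hKq] at hpos
  have hSpos : 0 < S := by rw [hS]; positivity
  nlinarith [hpos, hSpos]

end TIE

/-- One-dimensional trace inverse estimate: for a univariate real polynomial `q`
of degree at most `p` and `a < b`,
`q(b)² ≤ ((p+1)²/(b−a)) · ∫_a^b q(x)² dx`. -/
theorem one_dim_trace_inverse_estimate
    (p : ℕ) (q : Polynomial ℝ) (hq : q.natDegree ≤ p)
    (a b : ℝ) (hab : a < b) :
    (q.eval b) ^ 2 ≤ ((p + 1 : ℝ) ^ 2 / (b - a)) * ∫ x in Set.Ioo a b, (q.eval x) ^ 2 := by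
  have hba : (0:ℝ) < b - a := sub_pos.mpr hab
  set r : Polynomial ℝ := q.comp (Polynomial.C a + Polynomial.C (b - a) * Polynomial.X) with hrdef
  have hrdeg : r.natDegree ≤ p := by
    refine Polynomial.natDegree_comp_le.trans ?_
    have h1 : (Polynomial.C a + Polynomial.C (b - a) * Polynomial.X : Polynomial ℝ).natDegree ≤ 1 := by
      refine (Polynomial.natDegree_add_le _ _).trans ?_
      simp only [Polynomial.natDegree_C, max_le_iff]
      exact ⟨Nat.zero_le _, (Polynomial.natDegree_C_mul_le _ _).trans Polynomial.natDegree_X_le⟩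
    calc q.natDegree * (Polynomial.C a + Polynomial.C (b - a) * Polynomial.X : Polynomial ℝ).natDegree
        ≤ q.natDegree * 1 := Nat.mul_le_mul_left _ h1
      _ = q.natDegree := Nat.mul_one _
      _ ≤ p := hq
  have hre : ∀ x : ℝ, r.eval x = q.eval (a + (b - a) * x) := by
    intro x
    simp [hrdef, Polynomial.eval_comp]
  have hr1 : r.eval 1 = q.eval b := by
    rw [hre]
    norm_num
  have key := tie_key hrdeg
  rw [hr1] at key
  have h2 : tieI (r * r) = ∫ x in (0:ℝ)..1, (q.eval ((b - a) * x + a)) ^ 2 := by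
    rw [tieI_eq]
    apply intervalIntegral.integral_congr
    intro x _
    simp only [Polynomial.eval_mul, hre x]
    rw [show a + (b - a) * x = (b - a) * x + a from by ring]
    ring
  have h3 : (∫ x in (0:ℝ)..1, (q.eval ((b - a) * x + a)) ^ 2)
      = (b - a)⁻¹ * ∫ x in a..b, (q.eval x) ^ 2 := by
    rw [intervalIntegral.integral_comp_mul_add (fun y => (q.eval y) ^ 2) hba.ne' a]
    rw [show (b - a) * 0 + a = a from by ring, show (b - a) * 1 + a = b from by ring,
      smul_eq_mul]
  have h4 : (∫ x in a..b, (q.eval x) ^ 2) = ∫ x in Set.Ioo a b, (q.eval x) ^ 2 := by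
    rw [intervalIntegral.integral_of_le hab.le, MeasureTheory.integral_Ioc_eq_integral_Ioo]
  rw [h2, h3, h4] at key
  calc (q.eval b) ^ 2 ≤ ((p:ℝ) + 1) ^ 2 * ((b - a)⁻¹ * ∫ x in Set.Ioo a b, (q.eval x) ^ 2) := key
    _ = ((p + 1 : ℝ) ^ 2 / (b - a)) * ∫ x in Set.Ioo a b, (q.eval x) ^ 2 := by
        ring
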